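/- Let G = (V, E) be a finite directed graph and let s, t ∈ V be distinct. Call a set S ⊆ E an s–t-scenario if t is an endpoint of some arc of S and every node that is an endpoint of an arc of S is reachable from s in (V, S). For an s–t-scenario S, let V(S) denote the set of endpoints of arcs of S and let S* := { (v → u) ∈ E : v ∈ V(S) } be the set of arcs of E whose tail lies in V(S). Then the number of arc subsets F ⊆ E with t ∈ reach_F({s}) equals the sum, over all s–t-scenarios S, of 2^{|E ∖ S*|}. In symbols: |{ F ⊆ E : t ∈ reach_F({s}) }| = ∑_{S an s–t-scenario} 2^{|E ∖ S*|}. -/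

import Mathlib

/-!
Every connecting `F ⊆ E` determines the scenario `S` of its arcs whose tail is reachable from `s`
in `F`. Conversely, `F` lies over a given scenario `S` exactly when it contains `S` and no other arc
leaving `V(S)`: since `s ∈ V(S)`, extra arcs with tail outside `V(S)` can never be reached from `s`.
So the fibre over `S` is `{S ∪ T | T ⊆ E ∖ S*}`, of size `2^{|E ∖ S*|}`.
-/

/-- The set of nodes reachable from some node of `X` by a directed path
using only arcs of `S`. -/
def reach {V : Type*} (S : Set (V × V)) (X : Set V) : Set V :=
  {v | ∃ x ∈ X, Relation.ReflTransGen (fun a b : V => (a, b) ∈ S) x v}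

/-- `S` is an s–t-scenario: `S ⊆ E`, `t` is an endpoint of some arc of `S`, and
every endpoint of an arc of `S` is reachable from `s` using only arcs of `S`. -/
def IsScenario {V : Type*} (E : Finset (V × V)) (s t : V) (S : Finset (V × V)) : Prop :=
  S ⊆ E ∧ (∃ e ∈ S, e.1 = t ∨ e.2 = t) ∧
    ∀ v : V, (∃ e ∈ S, e.1 = v ∨ e.2 = v) → v ∈ reach (↑S : Set (V × V)) {s}

section Reach

variable {V : Type*}

lemma mem_reach_singleton {S : Set (V × V)} {s v : V} :
    v ∈ reach S {s} ↔ Relation.ReflTransGen (fun a b : V => (a, b) ∈ S) s v := by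
  simp [reach]

lemma reach_mono {S S' : Set (V × V)} (h : S ⊆ S') (X : Set V) : reach S X ⊆ reach S' X := by
  rintro v ⟨x, hx, hp⟩
  exact ⟨x, hx, Relation.ReflTransGen.mono (fun _ _ hab => h hab) _ _ hp⟩

lemma reach_subset_of_forall_mem {S : Set (V × V)} {X A : Set V} (hX : X ⊆ A)
    (hA : ∀ a b, (a, b) ∈ S → a ∈ A → b ∈ A) : reach S X ⊆ A := by
  rintro v ⟨x, hx, hp⟩
  induction hp with
  | refl => exact hX hx
  | tail _ hbc ih => exact hA _ _ hbc ih

end Reach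

section Scenario

open Classical

variable {V : Type*} {E F S T : Finset (V × V)} {s t : V}

/-- `v ∈ V(S)`. -/
def IsEndpoint (S : Finset (V × V)) (v : V) : Prop :=
  ∃ e ∈ S, e.1 = v ∨ e.2 = v

noncomputable def reachableArcs (F : Finset (V × V)) (s : V) : Finset (V × V) :=
  F.filter fun e => e.1 ∈ reach (↑F : Set (V × V)) {s}

lemma reachableArcs_subset : reachableArcs F s ⊆ F := Finset.filter_subset _ _

lemma reach_reachableArcs :
    reach (↑(reachableArcs F s) : Set (V × V)) {s} = reach (↑F : Set (V × V)) {s} := by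
  refine (reach_mono (by exact_mod_cast reachableArcs_subset) _).antisymm fun v hv => ?_
  rw [mem_reach_singleton] at hv ⊢
  induction hv with
  | refl => exact .refl
  | tail hsb hbc ih =>
    exact ih.tail (Finset.mem_filter.2 ⟨hbc, mem_reach_singleton.2 hsb⟩)

lemma isScenario_reachableArcs (hFE : F ⊆ E) (ht : t ∈ reach (↑F : Set (V × V)) {s})
    (hst : s ≠ t) : IsScenario E s t (reachableArcs F s) := by
  refine ⟨reachableArcs_subset.trans hFE, ?_, ?_⟩
  · rcases (mem_reach_singleton.1 ht).cases_tail with h | ⟨c, hsc, hct⟩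
    · exact absurd h.symm hst
    · exact ⟨(c, t), Finset.mem_filter.2 ⟨hct, mem_reach_singleton.2 hsc⟩, Or.inr rfl⟩
  · rintro v ⟨e, he, rfl | rfl⟩ <;> rw [reach_reachableArcs] <;>
      obtain ⟨heF, htail⟩ := Finset.mem_filter.1 he
    · exact htail
    · exact mem_reach_singleton.2 ((mem_reach_singleton.1 htail).tail heF)

lemma IsScenario.isEndpoint_source (hS : IsScenario E s t S) (hst : s ≠ t) : IsEndpoint S s := by
  obtain ⟨-, ht, hreach⟩ := hS
  rcases (mem_reach_singleton.1 (hreach t ht)).cases_head with h | ⟨c, hsc, -⟩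
  · exact absurd h hst
  · exact ⟨(s, c), hsc, Or.inl rfl⟩

variable [DecidableEq V]

/-- The paper's `S*`. -/
def arcsFrom (E S : Finset (V × V)) : Finset (V × V) :=
  E.filter fun e => ∃ f ∈ S, f.1 = e.1 ∨ f.2 = e.1

lemma reachableArcs_union (hs : IsEndpoint S s)
    (hS : ∀ v, IsEndpoint S v → v ∈ reach (↑S : Set (V × V)) {s})
    (hT : ∀ e ∈ T, ¬ IsEndpoint S e.1) : reachableArcs (S ∪ T) s = S := by
  have hSST : (↑S : Set (V × V)) ⊆ ↑(S ∪ T) := by exact_mod_cast Finset.subset_union_left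
  have hclosed : reach (↑(S ∪ T) : Set (V × V)) {s} ⊆ {v | IsEndpoint S v} := by
    refine reach_subset_of_forall_mem (by simpa using hs) fun a b hab ha => ?_
    rcases Finset.mem_union.1 (by exact_mod_cast hab) with h | h
    · exact ⟨(a, b), h, Or.inr rfl⟩
    · exact absurd ha (hT _ h)
  ext e
  refine ⟨fun he => ?_, fun he => ?_⟩
  · obtain ⟨heST, htail⟩ := Finset.mem_filter.1 he
    exact (Finset.mem_union.1 heST).resolve_right fun heT => hT e heT (hclosed htail)
  · exact Finset.mem_filter.2 ⟨Finset.mem_union_left _ he,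
      reach_mono hSST _ (hS _ ⟨e, he, Or.inl rfl⟩)⟩

lemma union_sdiff_arcsFrom_eq (hF : reachableArcs F s = S)
    (hS : ∀ v, IsEndpoint S v → v ∈ reach (↑S : Set (V × V)) {s}) :
    S ∪ (F \ arcsFrom E S) = F := by
  subst hF
  refine Finset.union_subset reachableArcs_subset Finset.sdiff_subset |>.antisymm fun e he => ?_
  by_cases hstar : e ∈ arcsFrom E (reachableArcs F s)
  · refine Finset.mem_union_left _ (Finset.mem_filter.2 ⟨he, ?_⟩)
    rw [← reach_reachableArcs]
    exact hS _ (Finset.mem_filter.1 hstar).2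
  · exact Finset.mem_union_right _ (Finset.mem_sdiff.2 ⟨he, hstar⟩)

lemma union_sdiff_arcsFrom_of_subset (hSE : S ⊆ E) (hT : T ⊆ E \ arcsFrom E S) :
    (S ∪ T) \ arcsFrom E S = T := by
  have hSstar : S ⊆ arcsFrom E S := fun e he =>
    Finset.mem_filter.2 ⟨hSE he, e, he, Or.inl rfl⟩
  rw [Finset.union_sdiff_distrib, Finset.sdiff_eq_empty_iff_subset.2 hSstar,
    Finset.empty_union, Finset.sdiff_eq_self_of_disjoint]
  exact Finset.disjoint_of_subset_left hT Finset.sdiff_disjoint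

lemma card_filter_reachableArcs_eq (hS : IsScenario E s t S) (hst : s ≠ t) :
    ((E.powerset.filter fun F : Finset (V × V) => t ∈ reach (↑F : Set (V × V)) {s}).filter
      fun F => reachableArcs F s = S).card = 2 ^ (E \ arcsFrom E S).card := by
  obtain ⟨hSE, ht, hreach⟩ := hS
  have hs : IsEndpoint S s := IsScenario.isEndpoint_source ⟨hSE, ht, hreach⟩ hst
  have hT : ∀ {T}, T ⊆ E \ arcsFrom E S → ∀ e ∈ T, ¬ IsEndpoint S e.1 := fun hT e he h =>
    (Finset.mem_sdiff.1 (hT he)).2 (Finset.mem_filter.2 ⟨(Finset.mem_sdiff.1 (hT he)).1, h⟩)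
  rw [← Finset.card_powerset]
  refine Finset.card_bij' (fun F _ => F \ arcsFrom E S) (fun T _ => S ∪ T) ?_ ?_ ?_ ?_
  · intro F hF
    simp only [Finset.mem_filter, Finset.mem_powerset] at hF ⊢
    exact Finset.sdiff_subset_sdiff hF.1.1 le_rfl
  · intro T hT'
    rw [Finset.mem_powerset] at hT'
    have hSST : (↑S : Set (V × V)) ⊆ ↑(S ∪ T) := by exact_mod_cast Finset.subset_union_left
    simp only [Finset.mem_filter, Finset.mem_powerset]
    exact ⟨⟨Finset.union_subset hSE (hT'.trans Finset.sdiff_subset),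
      reach_mono hSST _ (hreach t ht)⟩, reachableArcs_union hs hreach (hT hT')⟩
  · intro F hF
    simp only [Finset.mem_filter, Finset.mem_powerset] at hF
    exact union_sdiff_arcsFrom_eq hF.2 hreach
  · intro T hT'
    exact union_sdiff_arcsFrom_of_subset hSE (Finset.mem_powerset.1 hT')

end Scenario

open Classical in
theorem st_connecting_subsets_eq_sum_scenarios_general {V : Type*} [DecidableEq V]
    (E : Finset (V × V)) (s t : V) (hst : s ≠ t) :
    (E.powerset.filter
      (fun F : Finset (V × V) => t ∈ reach (↑F : Set (V × V)) {s})).card =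
    ∑ S ∈ E.powerset.filter (IsScenario E s t),
      2 ^ (E \ E.filter (fun e => ∃ f ∈ S, f.1 = e.1 ∨ f.2 = e.1)).card := by
  have hmaps : ∀ F ∈ E.powerset.filter
      (fun F : Finset (V × V) => t ∈ reach (↑F : Set (V × V)) {s}),
      reachableArcs F s ∈ E.powerset.filter (IsScenario E s t) := by
    intro F hF
    rw [Finset.mem_filter, Finset.mem_powerset] at hF ⊢
    have hS := isScenario_reachableArcs hF.1 hF.2 hst
    exact ⟨hS.1, hS⟩
  rw [Finset.card_eq_sum_card_fiberwise hmaps]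
  refine Finset.sum_congr rfl fun S hS => ?_
  exact card_filter_reachableArcs_eq (Finset.mem_filter.1 hS).2 hst

open Classical in
/-- The number of arc subsets `F ⊆ E` with `t ∈ reach_F({s})` equals
the sum over all s–t-scenarios `S` of `2^{|E ∖ S*|}`, where `S*` is the set of
arcs of `E` whose tail is an endpoint of an arc of `S`. -/
theorem st_connecting_subsets_eq_sum_scenarios {V : Type*} [Fintype V] [DecidableEq V]
    (E : Finset (V × V)) (s t : V) (hst : s ≠ t) :
    (E.powerset.filter
      (fun F : Finset (V × V) => t ∈ reach (↑F : Set (V × V)) {s})).card =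
    ∑ S ∈ E.powerset.filter (IsScenario E s t),
      2 ^ (E \ E.filter (fun e => ∃ f ∈ S, f.1 = e.1 ∨ f.2 = e.1)).card :=
  st_connecting_subsets_eq_sum_scenarios_general E s t hst
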